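/- With B_(n) denoting the n-fold flat left application of B (B_(1)=B, B_(n+1)=B_(n) B), the terms B_(6) and B_(10) are βη-equivalent; both equal λx.λy.λz.λw.λv. x (y z) (w v). -/
import Mathlib


/-- Untyped lambda terms in de Bruijn representation. -/
inductive Lam where
  | var : Nat → Lam
  | app : Lam → Lam → Lam
  | lam : Lam → Lam
deriving DecidableEq

namespace Lam

/-- Lift (shift by one) all free variables with index ≥ `c`. -/
def lift (c : Nat) : Lam → Lam
  | var n => if n < c then var n else var (n + 1)
  | app a b => app (lift c a) (lift c b)
  | lam a => lam (lift (c + 1) a)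

/-- Substitute `s` for the free variable with index `d`. -/
def subst (d : Nat) (s : Lam) : Lam → Lam
  | var n => if n = d then s else if d < n then var (n - 1) else var n
  | app a b => app (subst d s a) (subst d s b)
  | lam a => lam (subst (d + 1) (lift 0 s) a)

/-- One-step βη-reduction (compatible closure of β and η). -/
inductive Step : Lam → Lam → Prop
  | beta (a b : Lam) : Step (app (lam a) b) (subst 0 b a)
  | eta (a : Lam) : Step (lam (app (lift 0 a) (var 0))) a
  | appL {a a' : Lam} (b : Lam) : Step a a' → Step (app a b) (app a' b)
  | appR (a : Lam) {b b' : Lam} : Step b b' → Step (app a b) (app a b')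
  | xi {a a' : Lam} : Step a a' → Step (lam a) (lam a')

/-- βη-equivalence: the equivalence relation generated by one-step βη-reduction. -/
def BetaEtaEq (a b : Lam) : Prop := Relation.EqvGen Step a b

/-- The B combinator λf.λg.λx. f (g x). -/
def B : Lam := lam (lam (lam (app (var 2) (app (var 1) (var 0)))))

/-- `flat X n` is the (n+1)-fold flat left application, i.e. `X_(n+1)`:
`flat X 0 = X = X_(1)` and `flat X (n+1) = (flat X n) X = X_(n+2)`. -/
def flat (X : Lam) : Nat → Lam
  | 0 => X
  | n + 1 => app (flat X n) X

end Lam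

open Lam

namespace Lam

/-- Leftmost-outermost one-step β-reduction, if any. -/
def red : Lam → Option Lam
  | var _ => none
  | lam a => (red a).map lam
  | app (lam a) b => some (subst 0 b a)
  | app a b =>
    match red a with
    | some a' => some (app a' b)
    | none => (red b).map (app a)

theorem step_of_red : ∀ a b, red a = some b → Step a b := by
  intro a
  induction a with
  | var n => intro b h; simp [red] at h
  | lam a ih =>
    intro b h
    simp only [red, Option.map_eq_some_iff] at h
    obtain ⟨a', h1, rfl⟩ := h
    exact Step.xi (ih a' h1)
  | app a c iha ihc =>
    intro b h
    cases a with
    | lam a0 =>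
      simp only [red] at h
      cases h
      exact Step.beta a0 c
    | var n =>
      simp only [red, Option.map_eq_some_iff] at h
      obtain ⟨c', h1, rfl⟩ := h
      exact Step.appR _ (ihc c' h1)
    | app a1 a2 =>
      simp only [red] at h
      rcases ha : red (app a1 a2) with _ | a'
      · rw [ha] at h
        simp only [Option.map_eq_some_iff] at h
        obtain ⟨c', h1, rfl⟩ := h
        exact Step.appR _ (ihc c' h1)
      · rw [ha] at h
        cases h
        exact Step.appL _ (iha a' ha)

/-- Reduce `n` steps (stopping early at a normal form). -/
def redN : Nat → Lam → Lam
  | 0, a => a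
  | n + 1, a =>
    match red a with
    | some a' => redN n a'
    | none => a

theorem betaEtaEq_redN (n : Nat) (a : Lam) : BetaEtaEq a (redN n a) := by
  induction n generalizing a with
  | zero => exact Relation.EqvGen.refl a
  | succ n ih =>
    rcases h : red a with _ | a'
    · simp only [redN, h]; exact Relation.EqvGen.refl a
    · simp only [redN, h]
      exact Relation.EqvGen.trans _ _ _
        (Relation.EqvGen.rel _ _ (step_of_red a a' h)) (ih a')

end Lam

/-- B_(6) and B_(10) are βη-equivalent; both equal λx.λy.λz.λw.λv. x (y z) (w v). -/
theorem stmt2 :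
    BetaEtaEq (flat B 5) (flat B 9) ∧
    BetaEtaEq (flat B 5)
      (lam (lam (lam (lam (lam
        (app (app (var 4) (app (var 3) (var 2))) (app (var 1) (var 0)))))))) ∧
    BetaEtaEq (flat B 9)
      (lam (lam (lam (lam (lam
        (app (app (var 4) (app (var 3) (var 2))) (app (var 1) (var 0)))))))) := by
  have h5 : BetaEtaEq (flat B 5)
      (lam (lam (lam (lam (lam
        (app (app (var 4) (app (var 3) (var 2))) (app (var 1) (var 0)))))))) := by
    have h := betaEtaEq_redN 50 (flat B 5)
    rwa [show redN 50 (flat B 5) = lam (lam (lam (lam (lam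
        (app (app (var 4) (app (var 3) (var 2))) (app (var 1) (var 0))))))) from by decide] at h
  have h9 : BetaEtaEq (flat B 9)
      (lam (lam (lam (lam (lam
        (app (app (var 4) (app (var 3) (var 2))) (app (var 1) (var 0)))))))) := by
    have h := betaEtaEq_redN 50 (flat B 9)
    rwa [show redN 50 (flat B 9) = lam (lam (lam (lam (lam
        (app (app (var 4) (app (var 3) (var 2))) (app (var 1) (var 0))))))) from by decide] at h
  exact ⟨Relation.EqvGen.trans _ _ _ h5 (Relation.EqvGen.symm _ _ h9), h5, h9⟩
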